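/- For every 1-Lipschitz function h : M₃ → ℝ there exists k ∈ {1,2,3} such that for every m ∈ ℕ there exist 1-Lipschitz functions f, g : M₃ → ℝ with f(x) = h(x) and g(x) = h(x) for all x ∈ M₃ ∖ {u^k_m, v^k_m}, f(u^k_m) − f(v^k_m) = 1, and g(u^k_m) − g(v^k_m) = −1. -/

import Mathlib

/-- Build a metric space from a distance function which vanishes on the diagonal and takes
values in `[1,2]` off the diagonal (the triangle inequality is then automatic). -/
noncomputable def MetricSpace.ofOneTwo {α : Type*} (D : α → α → ℝ)
    (hself : ∀ x, D x x = 0) (hsymm : ∀ x y, D x y = D y x)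
    (hlow : ∀ x y, x ≠ y → 1 ≤ D x y) (hhigh : ∀ x y, D x y ≤ 2) : MetricSpace α :=
  { dist := D
    dist_self := hself
    dist_comm := hsymm
    dist_triangle := by
      intro x y z
      show D x z ≤ D x y + D y z
      rcases eq_or_ne x y with rfl | hxy
      · simp [hself]
      rcases eq_or_ne y z with rfl | hyz
      · simp [hself]
      have h1 := hlow x y hxy
      have h2 := hlow y z hyz
      have h3 := hhigh x z
      linarith
    eq_of_dist_eq_zero := by
      intro x y hxy
      replace hxy : D x y = 0 := hxy
      by_contra h
      have := hlow x y h
      linarith }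

/-- The points of the metric space `M₃`: `a i` for `i : Fin 3` and `u i m, v i m` for
`i : Fin 3`, `m : ℕ`. -/
inductive M3 where
  | a : Fin 3 → M3
  | u : Fin 3 → ℕ → M3
  | v : Fin 3 → ℕ → M3
deriving DecidableEq

namespace M3

/-- One-sided description of the pairs of points of `M₃` at distance `1`:
`d(aᵢ, uʲₘ) = d(aᵢ, vʲₘ) = 1` for `i ≠ j`, and `d(uʲₘ, vʲₘ) = 1`. -/
def one : M3 → M3 → Prop
  | .a i, .u j _ => i ≠ j
  | .a i, .v j _ => i ≠ j
  | .u j m, .v i l => j = i ∧ m = l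
  | _, _ => False

/-- The distance on `M₃`: `0` on the diagonal, `1` on the pairs described by `M3.one`
(in either order), and `2` otherwise. -/
noncomputable def D (p q : M3) : ℝ :=
  open scoped Classical in
  if p = q then 0 else if one p q ∨ one q p then 1 else 2

noncomputable instance : MetricSpace M3 :=
  MetricSpace.ofOneTwo D
    (fun x => by simp [D])
    (fun x y => by
      rcases eq_or_ne x y with rfl | h
      · rfl
      · rw [D, D, if_neg h, if_neg (Ne.symm h)]
        rcases em (one x y ∨ one y x) with h2 | h2
        · rw [if_pos h2, if_pos h2.symm]
        · rw [if_neg h2, if_neg fun hc => h2 hc.symm])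
    (fun x y h => by rw [D, if_neg h]; split_ifs <;> norm_num)
    (fun x y => by rw [D]; split_ifs <;> norm_num)

end M3

/-- A function `f : M → ℝ` is `L`-Lipschitz: `|f x - f y| ≤ L · d(x, y)` for all `x, y`. -/
def LipWith {M : Type*} [MetricSpace M] (L : ℝ) (f : M → ℝ) : Prop :=
  ∀ x y : M, |f x - f y| ≤ L * dist x y

/-!
All three values `h (a i)` lie within `2` of each other, so two of them lie within `1`; let `k`
be the remaining index. The intervals of radius `1/2` around those two values and of radius
`3/2` around `h (a k)` pairwise meet, hence share a point `t`. Every point other than `a k` is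
at distance at most `1` from some `a i` with `i ≠ k`, so all values of `h` lie within `3/2`
of `t`. The only neighbours of `uᵏₘ` and `vᵏₘ` are each other and the `a i` with `i ≠ k`,
so giving them the values `t ± 1/2`, in either order, keeps the function `1`-Lipschitz.
-/

section Lipschitz

variable {M : Type*} [MetricSpace M]

def LipOnWith (L : ℝ) (f : M → ℝ) (S : Set M) : Prop :=
  ∀ x ∈ S, ∀ y ∈ S, |f x - f y| ≤ L * dist x y

theorem LipWith.lipOnWith {L : ℝ} {f : M → ℝ} (hf : LipWith L f) (S : Set M) :
    LipOnWith L f S :=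
  fun x _ y _ => hf x y

theorem LipOnWith.mono {L : ℝ} {f : M → ℝ} {S T : Set M} (hf : LipOnWith L f S) (hTS : T ⊆ S) :
    LipOnWith L f T :=
  fun x hx y hy => hf x (hTS hx) y (hTS hy)

theorem lipOnWith_univ {L : ℝ} {f : M → ℝ} : LipOnWith L f Set.univ ↔ LipWith L f :=
  ⟨fun hf x y => hf x trivial y trivial, fun hf => hf.lipOnWith _⟩

variable [DecidableEq M]

theorem LipOnWith.update {L : ℝ} {f : M → ℝ} {S : Set M} (hf : LipOnWith L f S) {p : M}
    (hp : p ∉ S) {b : ℝ} (hb : ∀ w ∈ S, |b - f w| ≤ L * dist p w) :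
    LipOnWith L (Function.update f p b) (insert p S) := by
  have hS : ∀ w ∈ S, Function.update f p b w = f w := fun w hw =>
    Function.update_of_ne (ne_of_mem_of_not_mem hw hp) _ _
  rintro x (rfl | hx) y (rfl | hy)
  · simp
  · simpa [hS y hy] using hb y hy
  · simpa [hS x hx, abs_sub_comm, dist_comm] using hb x hx
  · simpa [hS x hx, hS y hy] using hf x hx y hy

theorem LipWith.update_update {L : ℝ} {f : M → ℝ} (hf : LipWith L f) {p q : M} {b c : ℝ}
    (hbc : |b - c| ≤ L * dist p q)
    (hb : ∀ w, w ≠ p → w ≠ q → |b - f w| ≤ L * dist p w)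
    (hc : ∀ w, w ≠ p → w ≠ q → |c - f w| ≤ L * dist q w) :
    LipWith L (Function.update (Function.update f p b) q c) := by
  have hp : LipOnWith L (Function.update f p b) {q}ᶜ := by
    refine ((hf.lipOnWith {p, q}ᶜ).update (by simp) fun w hw => ?_).mono fun w hw => ?_
    · simp only [Set.mem_compl_iff, Set.mem_insert_iff, Set.mem_singleton_iff, not_or] at hw
      exact hb w hw.1 hw.2
    · by_cases w = p <;> simp_all
  have hq := hp.update (p := q) (b := c) (by simp) fun w hw => by
    rcases eq_or_ne w p with rfl | hwp
    · simpa [abs_sub_comm, dist_comm] using hbc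
    · simpa [hwp] using hc w hwp hw
  rwa [show insert q {q}ᶜ = Set.univ by ext; simp [em], lipOnWith_univ] at hq

end Lipschitz

theorem exists_forall_abs_sub_le {ι : Type*} [Nonempty ι] (A r : ι → ℝ)
    (h : ∀ i j, A i - r i ≤ A j + r j) : ∃ t, ∀ i, |t - A i| ≤ r i := by
  inhabit ι
  have hbdd : BddAbove (Set.range fun i => A i - r i) :=
    ⟨A default + r default, Set.forall_mem_range.2 fun i => h i default⟩
  refine ⟨⨆ i, (A i - r i), fun i => abs_sub_le_iff.2 ⟨?_, ?_⟩⟩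
  · linarith [ciSup_le fun j => h j i]
  · linarith [le_ciSup hbdd i]

theorem exists_forall_ne_abs_sub_le_one (A : Fin 3 → ℝ) (hA : ∀ i j, |A i - A j| ≤ 2) :
    ∃ k, ∀ i j, i ≠ k → j ≠ k → |A i - A j| ≤ 1 := by
  have hclose : |A 0 - A 1| ≤ 1 ∨ |A 1 - A 2| ≤ 1 ∨ |A 0 - A 2| ≤ 1 := by
    obtain ⟨h01, h01'⟩ := abs_le.1 (hA 0 1)
    obtain ⟨h12, h12'⟩ := abs_le.1 (hA 1 2)
    obtain ⟨h02, h02'⟩ := abs_le.1 (hA 0 2)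
    by_contra! h
    obtain ⟨h1, h2, h3⟩ := h
    rw [lt_abs] at h1 h2 h3
    rcases h1 with h1 | h1 <;> rcases h2 with h2 | h2 <;> rcases h3 with h3 | h3 <;> linarith
  rcases hclose with h | h | h <;> [use 2; use 0; use 1] <;> intro i j hi hj <;>
    fin_cases i <;> fin_cases j <;> simp at hi hj ⊢ <;> first | exact h | rwa [abs_sub_comm]

theorem exists_forall_ne_abs_sub_le_half (A : Fin 3 → ℝ) (hA : ∀ i j, |A i - A j| ≤ 2) :
    ∃ k t, (∀ i, i ≠ k → |t - A i| ≤ 1 / 2) ∧ |t - A k| ≤ 3 / 2 := by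
  obtain ⟨k, hk⟩ := exists_forall_ne_abs_sub_le_one A hA
  obtain ⟨t, ht⟩ := exists_forall_abs_sub_le A (fun i => if i = k then 3 / 2 else 1 / 2)
    fun i j => by
      obtain ⟨hij, hij'⟩ := abs_le.1 (hA i j)
      split_ifs with hi hj hj
      · linarith
      · linarith
      · linarith
      · linarith [(abs_le.1 (hk i j hi hj)).2]
  exact ⟨k, t, fun i hi => by simpa [hi] using ht i, by simpa using ht k⟩

namespace M3

theorem dist_eq (p q : M3) : dist p q = D p q := rfl

theorem dist_le_two (p q : M3) : dist p q ≤ 2 := by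
  rw [dist_eq, D]; split_ifs <;> norm_num

theorem one_le_dist_of_ne {p q : M3} (h : p ≠ q) : 1 ≤ dist p q := by
  rw [dist_eq, D, if_neg h]; split_ifs <;> norm_num

theorem dist_u_v (k : Fin 3) (m : ℕ) : dist (u k m) (v k m) = 1 := by
  simp [dist_eq, D, one]

theorem exists_dist_a_le_one {k : Fin 3} {w : M3} (hw : w ≠ a k) :
    ∃ i, i ≠ k ∧ dist (a i) w ≤ 1 := by
  have hother : ∀ k j : Fin 3, ∃ i, i ≠ k ∧ i ≠ j := by decide
  cases w with
  | a i => exact ⟨i, fun h => hw (h ▸ rfl), by simp⟩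
  | u j l =>
    obtain ⟨i, hik, hij⟩ := hother k j
    exact ⟨i, hik, by simp [dist_eq, D, one, hij]⟩
  | v j l =>
    obtain ⟨i, hik, hij⟩ := hother k j
    exact ⟨i, hik, by simp [dist_eq, D, one, hij]⟩

theorem dist_u_eq_two {k : Fin 3} {m : ℕ} {w : M3} (hu : w ≠ u k m) (hv : w ≠ v k m)
    (ha : ∀ i, i ≠ k → w ≠ a i) : dist (u k m) w = 2 := by
  rcases w with i | ⟨j, l⟩ | ⟨j, l⟩
  · obtain rfl : i = k := by_contra fun hik => ha i hik rfl
    simp [dist_eq, D, one]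
  all_goals simp_all [dist_eq, D, one, eq_comm]

theorem dist_v_eq_dist_u {k : Fin 3} {m : ℕ} {w : M3} (hu : w ≠ u k m) (hv : w ≠ v k m) :
    dist (v k m) w = dist (u k m) w := by
  cases w <;> simp_all [dist_eq, D, one, eq_comm] <;> split_ifs <;> simp_all

variable {h : M3 → ℝ} {k : Fin 3} {t : ℝ}

theorem abs_sub_le_three_halves (hh : LipWith 1 h)
    (hnear : ∀ i, i ≠ k → |t - h (a i)| ≤ 1 / 2) (hk : |t - h (a k)| ≤ 3 / 2) (w : M3) :
    |t - h w| ≤ 3 / 2 := by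
  rcases eq_or_ne w (a k) with rfl | hw
  · exact hk
  obtain ⟨i, hik, hi⟩ := exists_dist_a_le_one hw
  calc |t - h w| ≤ |t - h (a i)| + |h (a i) - h w| := abs_sub_le _ _ _
    _ ≤ 1 / 2 + 1 := add_le_add (hnear i hik) ((hh _ _).trans (by linarith))
    _ = 3 / 2 := by norm_num

theorem abs_sub_le_dist_u (hh : LipWith 1 h)
    (hnear : ∀ i, i ≠ k → |t - h (a i)| ≤ 1 / 2) (hk : |t - h (a k)| ≤ 3 / 2)
    {m : ℕ} {s : ℝ} (hs : |s - t| ≤ 1 / 2) {w : M3} (hu : w ≠ u k m) (hv : w ≠ v k m) :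
    |s - h w| ≤ dist (u k m) w := by
  have hsw := abs_sub_le s t (h w)
  by_cases ha : ∃ i, i ≠ k ∧ w = a i
  · obtain ⟨i, hik, rfl⟩ := ha
    linarith [hnear i hik, one_le_dist_of_ne hu.symm]
  · push Not at ha
    rw [dist_u_eq_two hu hv ha]
    linarith [abs_sub_le_three_halves hh hnear hk w]

theorem lipWith_update_u_v (hh : LipWith 1 h)
    (hnear : ∀ i, i ≠ k → |t - h (a i)| ≤ 1 / 2) (hk : |t - h (a k)| ≤ 3 / 2)
    (m : ℕ) {b c : ℝ} (hb : |b - t| ≤ 1 / 2) (hc : |c - t| ≤ 1 / 2) :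
    LipWith 1 (Function.update (Function.update h (u k m) b) (v k m) c) := by
  refine hh.update_update ?_ (fun w hu hv => ?_) (fun w hu hv => ?_)
  · rw [dist_u_v, one_mul]
    linarith [abs_sub_le b t c, abs_sub_comm c t]
  · rw [one_mul]
    exact abs_sub_le_dist_u hh hnear hk hb hu hv
  · rw [one_mul, dist_v_eq_dist_u hu hv]
    exact abs_sub_le_dist_u hh hnear hk hc hu hv

end M3

/-- For every `1`-Lipschitz `h : M₃ → ℝ` there is a `k ∈ {1,2,3}` such that for every `m`
there are `1`-Lipschitz functions `f, g : M₃ → ℝ` agreeing with `h` off `{uᵏₘ, vᵏₘ}` with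
`f(uᵏₘ) - f(vᵏₘ) = 1` and `g(uᵏₘ) - g(vᵏₘ) = -1`. -/
theorem M3_flip (h : M3 → ℝ) (hh : LipWith 1 h) :
    ∃ k : Fin 3, ∀ m : ℕ, ∃ f g : M3 → ℝ,
      LipWith 1 f ∧ LipWith 1 g ∧
      (∀ x : M3, x ≠ M3.u k m → x ≠ M3.v k m → f x = h x ∧ g x = h x) ∧
      f (M3.u k m) - f (M3.v k m) = 1 ∧ g (M3.u k m) - g (M3.v k m) = -1 := by
  obtain ⟨k, t, hnear, hk⟩ := exists_forall_ne_abs_sub_le_half (fun i => h (M3.a i)) fun i j =>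
    (hh _ _).trans (by rw [one_mul]; exact M3.dist_le_two _ _)
  have hup : |t + 1 / 2 - t| ≤ 1 / 2 := by norm_num [abs_le]
  have hdown : |t - 1 / 2 - t| ≤ 1 / 2 := by norm_num [abs_le]
  refine ⟨k, fun m => ⟨_, _, M3.lipWith_update_u_v hh hnear hk m hup hdown,
    M3.lipWith_update_u_v hh hnear hk m hdown hup, fun x hu hv => ?_, ?_, ?_⟩⟩
  · simp [Function.update_of_ne hu, Function.update_of_ne hv]
  all_goals
    rw [Function.update_self, Function.update_of_ne (by simp), Function.update_self]
    ring
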